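/- Let k ≥ 2 and n ≥ 2 be integers, suppose the characteristic of F_q is not 2, and let λ ∈ F_q be nonzero. Then for all q > n²k¹⁶, there exist n pairs (x₁, y₁), …, (x_n, y_n) ∈ F_q × F_q such that: (i) x_i^k + y_i^k = λ for all 1 ≤ i ≤ n; (ii) x_i^k ≠ y_i^k for all 1 ≤ i ≤ n; (iii) x_i^k ≠ x_j^k and y_i^k ≠ y_j^k for all i ≠ j. -/

import Mathlib

/-!
Let `d = gcd(k, q - 1)` and let `χ` be a complex multiplicative character of `F_q` of order `d`.
Every `a` with `χ a = 1` is a `k`-th power, so it suffices to find `n` elements `a ≠ λ / 2`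
with `χ a = χ (λ - a) = 1` and to take `x_i ^ k = a_i`, `y_i ^ k = λ - a_i`.
Since `∑_{j < d} χ ^ j` is `d` times the indicator of `ker χ`, the number `N` of such `a`
(without the condition `a ≠ λ / 2`) satisfies
`d² N = ∑_{i, j < d} χ^i(λ) χ^j(λ) J(χ^i, χ^j)`. The term `i = j = 0` is `J(1, 1) = q - 2` and
every other Jacobi sum has absolute value at most `√q`, so `|d² N - (q - 2)| ≤ (d² - 1) √q`,
which forces `N > n` once `q > n² k¹⁶`.
-/

open Finset

lemma exists_pow_eq_pow_gcd_natCard {G : Type*} [Group G] (k : ℕ) (x : G) :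
    ∃ y : G, y ^ k = x ^ k.gcd (Nat.card G) := by
  refine ⟨x ^ k.gcdA (Nat.card G), ?_⟩
  rw [← zpow_natCast, ← zpow_mul, ← zpow_natCast x, Nat.gcd_eq_gcd_ab, zpow_add,
    zpow_mul x _ (k.gcdB _), zpow_natCast x (Nat.card G), pow_card_eq_one', one_zpow, mul_one,
    mul_comm]

lemma eq_div_two_of_add_self_eq {K : Type*} [Field K] {a c : K} (hc : c ≠ 0) (h : a + a = c) :
    a = c / 2 := by
  have two_ne_zero : (2 : K) ≠ 0 := fun h2 => hc (by rw [← h, ← two_mul, h2, zero_mul])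
  rw [eq_div_iff two_ne_zero, ← h, mul_two]

namespace MulChar

lemma norm_apply_coe_eq_one {M K : Type*} [CommMonoid M] [Finite Mˣ] [NormedField K]
    (χ : MulChar M K) (a : Mˣ) : ‖χ a‖ = 1 := by
  refine (pow_eq_one_iff_of_nonneg (norm_nonneg _) (Nat.card_pos (α := Mˣ)).ne').mp ?_
  rw [← norm_pow, ← map_pow, ← Units.val_pow_eq_pow_val, pow_card_eq_one', Units.val_one,
    map_one, norm_one]

lemma orderOf_apply_generator {M R : Type*} [CommMonoid M] [CommMonoidWithZero R] {g : Mˣ}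
    (hg : ∀ x, x ∈ Subgroup.zpowers g) (χ : MulChar M R) : orderOf (χ g) = orderOf χ :=
  orderOf_eq_orderOf_iff.mpr fun n => by rw [eq_iff hg, pow_apply_coe, one_apply_coe]

lemma exists_pow_orderOf_eq_of_apply_eq_one {M R : Type*} [CommMonoid M] [Finite Mˣ]
    [IsCyclic Mˣ] [CommMonoidWithZero R] (χ : MulChar M R) {a : Mˣ} (ha : χ a = 1) :
    ∃ y : Mˣ, y ^ orderOf χ = a := by
  obtain ⟨g, hg⟩ := IsCyclic.exists_generator (α := Mˣ)
  obtain ⟨t, rfl⟩ := mem_powers_iff_mem_zpowers.mpr (hg a)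
  rw [Units.val_pow_eq_pow_val, map_pow] at ha
  obtain ⟨s, rfl⟩ := orderOf_apply_generator hg χ ▸ orderOf_dvd_of_pow_eq_one ha
  exact ⟨g ^ s, by rw [← pow_mul, mul_comm]⟩

lemma exists_pow_eq_of_apply_eq_one {F R : Type*} [Field F] [Fintype F]
    [CommMonoidWithZero R] [Nontrivial R] {k : ℕ} (χ : MulChar F R)
    (hχ : orderOf χ = k.gcd (Fintype.card F - 1)) {b : F} (hb : χ b = 1) :
    ∃ x : F, x ^ k = b := by
  classical
  lift b to Fˣ using apply_ne_zero_iff.mp (hb ▸ one_ne_zero)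
  obtain ⟨y, rfl⟩ := exists_pow_orderOf_eq_of_apply_eq_one χ hb
  obtain ⟨z, hz⟩ := exists_pow_eq_pow_gcd_natCard k y
  rw [Nat.card_eq_fintype_card, Fintype.card_units, ← hχ] at hz
  exact ⟨z, by rw [← Units.val_pow_eq_pow_val, hz]⟩

lemma sum_range_orderOf_pow_apply {M R : Type*} [CommMonoid M] [Field R] [DecidableEq R]
    (χ : MulChar M R) (a : M) :
    ∑ j ∈ range (orderOf χ), (χ ^ j) a = if χ a = 1 then (orderOf χ : R) else 0 := by
  by_cases ha : IsUnit a
  · lift a to Mˣ using ha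
    simp_rw [pow_apply_coe]
    split_ifs with h1
    · simp [h1]
    · rw [geom_sum_eq h1, ← pow_apply_coe, pow_orderOf_eq_one, one_apply_coe, sub_self,
        zero_div]
  · simp [map_nonunit _ ha]

lemma sum_apply_mul_apply_sub_eq_jacobiSum {F R : Type*} [Field F] [Fintype F] [CommRing R]
    (χ φ : MulChar F R) {c : F} (hc : c ≠ 0) :
    ∑ a, χ a * φ (c - a) = χ c * φ c * jacobiSum χ φ := by
  rw [jacobiSum, mul_sum]
  refine (Fintype.sum_equiv (Equiv.mulLeft₀ c hc) _ _ fun x => ?_).symm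
  simp only [Equiv.mulLeft₀_apply, ← mul_one_sub, map_mul]
  ring

end MulChar

section JacobiSum

variable {F : Type*} [Field F] [Fintype F]

lemma star_jacobiSum (χ φ : MulChar F ℂ) : star (jacobiSum χ φ) = jacobiSum χ⁻¹ φ⁻¹ := by
  rw [← MulChar.star_eq_inv, ← MulChar.star_eq_inv]
  exact (jacobiSum_ringHomComp χ φ (starRingEnd ℂ)).symm

lemma norm_jacobiSum_eq_sqrt_card {χ φ : MulChar F ℂ} (hχ : χ ≠ 1) (hφ : φ ≠ 1)
    (hχφ : χ * φ ≠ 1) : ‖jacobiSum χ φ‖ = √(Fintype.card F) := by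
  have hchar : ringChar ℂ ≠ ringChar F := by
    rw [ringChar.eq_zero]
    exact (CharP.char_is_prime F (ringChar F)).ne_zero.symm
  have h := jacobiSum_mul_jacobiSum_inv hchar hχ hφ hχφ
  rw [← star_jacobiSum, RCLike.star_def, Complex.mul_conj, ← Complex.sq_norm] at h
  rw [← Real.sqrt_sq (norm_nonneg _)]
  exact congrArg Real.sqrt (by exact_mod_cast h)

lemma norm_jacobiSum_le_sqrt_card {χ φ : MulChar F ℂ} (h : χ ≠ 1 ∨ φ ≠ 1) :
    ‖jacobiSum χ φ‖ ≤ √(Fintype.card F) := by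
  have one_le : (1 : ℝ) ≤ √(Fintype.card F) :=
    Real.one_le_sqrt.mpr (by exact_mod_cast Fintype.card_pos)
  by_cases hχ : χ = 1
  · rw [hχ, jacobiSum_one_nontrivial (h.resolve_left (not_not.mpr hχ)), norm_neg, norm_one]
    exact one_le
  by_cases hφ : φ = 1
  · rw [hφ, jacobiSum_comm, jacobiSum_one_nontrivial hχ, norm_neg, norm_one]
    exact one_le
  by_cases hχφ : χ * φ = 1
  · rw [eq_inv_of_mul_eq_one_right hχφ, jacobiSum_nontrivial_inv hχ, norm_neg,
      ← Units.coe_neg_one, MulChar.norm_apply_coe_eq_one]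
    exact one_le
  exact (norm_jacobiSum_eq_sqrt_card hχ hφ hχφ).le

end JacobiSum

lemma sq_mul_lt_of_mul_pow_sixteen_lt {d k n q : ℝ} (hd : 0 ≤ d) (hdk : d ≤ k) (hk : 2 ≤ k)
    (hn : 1 ≤ n) (hq : n ^ 2 * k ^ 16 < q) : d ^ 2 * n < q - 2 - (d ^ 2 - 1) * √q := by
  have hq0 : 0 ≤ q := (by positivity : 0 ≤ n ^ 2 * k ^ 16).trans hq.le
  have hs : n * k ^ 8 < √q := Real.lt_sqrt_of_sq_lt (by linarith)
  have hsq : √q ^ 2 = q := Real.sq_sqrt hq0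
  have hk8 : 2 * k ^ 2 ≤ k ^ 8 := by nlinarith [pow_le_pow_left₀ (by norm_num) hk 6]
  have hd2 : d ^ 2 ≤ k ^ 2 := pow_le_pow_left₀ hd hdk 2
  nlinarith [mul_le_mul_of_nonneg_left hn (by positivity : (0 : ℝ) ≤ k ^ 8)]

namespace MulChar

variable {F : Type*} [Field F] [Fintype F]

lemma sq_orderOf_mul_card_eq_sum_jacobiSum (χ : MulChar F ℂ) {c : F} (hc : c ≠ 0) :
    (orderOf χ : ℂ) ^ 2 * #{a | χ a = 1 ∧ χ (c - a) = 1} =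
      ∑ p ∈ range (orderOf χ) ×ˢ range (orderOf χ),
        (χ ^ p.1) c * (χ ^ p.2) c * jacobiSum (χ ^ p.1) (χ ^ p.2) := by
  calc (orderOf χ : ℂ) ^ 2 * #{a | χ a = 1 ∧ χ (c - a) = 1}
      = ∑ a, (∑ i ∈ range (orderOf χ), (χ ^ i) a) *
          ∑ j ∈ range (orderOf χ), (χ ^ j) (c - a) := by
        simp only [sum_range_orderOf_pow_apply, ite_zero_mul_ite_zero, ← sq]
        rw [← sum_filter, sum_const, nsmul_eq_mul, mul_comm]
    _ = ∑ p ∈ range (orderOf χ) ×ˢ range (orderOf χ), ∑ a, (χ ^ p.1) a * (χ ^ p.2) (c - a) := by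
        simp only [sum_mul_sum, sum_product]
        rw [sum_comm]
        exact sum_congr rfl fun i _ => sum_comm
    _ = _ := sum_congr rfl fun p _ => sum_apply_mul_apply_sub_eq_jacobiSum _ _ hc

theorem abs_sq_orderOf_mul_card_sub_le (χ : MulChar F ℂ) {c : F} (hc : c ≠ 0) :
    |(orderOf χ : ℝ) ^ 2 * #{a | χ a = 1 ∧ χ (c - a) = 1} - (Fintype.card F - 2)| ≤
      ((orderOf χ : ℝ) ^ 2 - 1) * √(Fintype.card F) := by
  set d := orderOf χ
  set P := range d ×ˢ range d
  set term : ℕ × ℕ → ℂ := fun p => (χ ^ p.1) c * (χ ^ p.2) c * jacobiSum (χ ^ p.1) (χ ^ p.2)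
  have h00 : ((0, 0) : ℕ × ℕ) ∈ P := by simp [P, d, orderOf_pos χ]
  have term00 : term (0, 0) = Fintype.card F - 2 := by
    simp [term, one_apply hc.isUnit, jacobiSum_one_one]
  have term_le : ∀ p ∈ P.erase (0, 0), ‖term p‖ ≤ √(Fintype.card F) := by
    rintro ⟨i, j⟩ hp
    simp only [mem_erase, ne_eq, Prod.mk.injEq, not_and_or, mem_product, mem_range, P] at hp
    have norm_apply_c (ψ : MulChar F ℂ) : ‖ψ c‖ = 1 := by
      simpa using ψ.norm_apply_coe_eq_one hc.isUnit.unit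
    simp only [term, norm_mul, norm_apply_c, one_mul]
    refine norm_jacobiSum_le_sqrt_card (hp.1.imp ?_ ?_)
    · exact fun hi => pow_ne_one_of_lt_orderOf hi hp.2.1
    · exact fun hj => pow_ne_one_of_lt_orderOf hj hp.2.2
  have card_erase : ((P.erase (0, 0)).card : ℝ) = (d : ℝ) ^ 2 - 1 := by
    rw [card_erase_of_mem h00, card_product, card_range, Nat.cast_sub (Nat.one_le_iff_ne_zero.mpr
      (mul_ne_zero (orderOf_pos χ).ne' (orderOf_pos χ).ne'))]
    push_cast
    ring
  have split : (d : ℂ) ^ 2 * #{a | χ a = 1 ∧ χ (c - a) = 1} - (Fintype.card F - 2) =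
      ∑ p ∈ P.erase (0, 0), term p := by
    rw [sq_orderOf_mul_card_eq_sum_jacobiSum χ hc, ← add_sum_erase P term h00, term00,
      add_sub_cancel_left]
  calc |(d : ℝ) ^ 2 * #{a | χ a = 1 ∧ χ (c - a) = 1} - (Fintype.card F - 2)|
      = ‖∑ p ∈ P.erase (0, 0), term p‖ := by
        rw [← split, ← Real.norm_eq_abs, ← Complex.norm_real]
        push_cast
        rfl
    _ ≤ ∑ p ∈ P.erase (0, 0), ‖term p‖ := norm_sum_le _ _
    _ ≤ (P.erase (0, 0)).card • √(Fintype.card F) := sum_le_card_nsmul _ _ _ term_le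
    _ = ((d : ℝ) ^ 2 - 1) * √(Fintype.card F) := by rw [nsmul_eq_mul, card_erase]

lemma lt_card_of_mul_pow_sixteen_lt {k n : ℕ} (χ : MulChar F ℂ) (hχ : orderOf χ ≤ k)
    (hk : 2 ≤ k) (hn : 1 ≤ n) (hq : n ^ 2 * k ^ 16 < Fintype.card F) {c : F} (hc : c ≠ 0) :
    n < #{a | χ a = 1 ∧ χ (c - a) = 1} := by
  have lower := (abs_le.mp (abs_sq_orderOf_mul_card_sub_le χ hc)).1
  have upper := sq_mul_lt_of_mul_pow_sixteen_lt (d := orderOf χ) (k := k) (n := n)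
    (q := Fintype.card F) (by positivity) (by exact_mod_cast hχ) (by exact_mod_cast hk)
    (by exact_mod_cast hn) (by exact_mod_cast hq)
  have : (orderOf χ : ℝ) ^ 2 * n < (orderOf χ : ℝ) ^ 2 * #{a | χ a = 1 ∧ χ (c - a) = 1} := by
    linarith
  exact_mod_cast lt_of_mul_lt_mul_left this (by positivity)

end MulChar

theorem stmt_9_general (k n : ℕ) (hk : 2 ≤ k) (hn : 2 ≤ n)
    (F : Type*) [Field F] [Fintype F]
    (lam : F) (hlam : lam ≠ 0)
    (hq : n ^ 2 * k ^ 16 < Fintype.card F) :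
    ∃ x y : Fin n → F,
      (∀ i, x i ^ k + y i ^ k = lam) ∧
      (∀ i, x i ^ k ≠ y i ^ k) ∧
      (∀ i j, i ≠ j → x i ^ k ≠ x j ^ k ∧ y i ^ k ≠ y j ^ k) := by
  classical
  obtain ⟨χ, hχ⟩ := MulChar.exists_mulChar_orderOf F (Nat.gcd_dvd_right k _)
    (Complex.isPrimitiveRoot_exp _ (Nat.gcd_pos_of_pos_left _ (by omega)).ne')
  set S : Finset F := {a | χ a = 1 ∧ χ (lam - a) = 1}
  have hS : n < #S :=
    χ.lt_card_of_mul_pow_sixteen_lt (hχ ▸ Nat.gcd_le_left _ (by omega)) hk (by omega) hq hlam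
  obtain ⟨a⟩ : Nonempty (Fin n ↪ S.erase (lam / 2)) := by
    refine Function.Embedding.nonempty_of_card_le ?_
    have := pred_card_le_card_erase (s := S) (a := lam / 2)
    simp only [Fintype.card_fin, Fintype.card_coe]
    omega
  have ha (i : Fin n) := mem_filter.mp (mem_of_mem_erase (a i).2)
  choose x hx using fun i => χ.exists_pow_eq_of_apply_eq_one hχ (ha i).2.1
  choose y hy using fun i => χ.exists_pow_eq_of_apply_eq_one hχ (ha i).2.2
  refine ⟨x, y, fun i => by rw [hx, hy, add_sub_cancel], fun i h => ?_, fun i j hij => ?_⟩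
  · rw [hx, hy, eq_sub_iff_add_eq] at h
    exact ne_of_mem_erase (a i).2 (eq_div_two_of_add_self_eq hlam h)
  · have hne : (a i : F) ≠ a j := fun h => hij (a.injective (Subtype.ext h))
    rw [hx, hx, hy, hy]
    exact ⟨hne, fun h => hne (sub_right_injective h)⟩

/-- For odd characteristic, `λ ≠ 0` and `q > n²k¹⁶`, the equation `X^k + Y^k = λ` has
`n` solutions `(x_i, y_i)` with `x_i^k ≠ y_i^k`, and pairwise distinct `k`-th powers. -/
theorem stmt_9 (k n : ℕ) (hk : 2 ≤ k) (hn : 2 ≤ n)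
    (F : Type*) [Field F] [Fintype F]
    (hchar : ringChar F ≠ 2) (lam : F) (hlam : lam ≠ 0)
    (hq : n ^ 2 * k ^ 16 < Fintype.card F) :
    ∃ x y : Fin n → F,
      (∀ i, x i ^ k + y i ^ k = lam) ∧
      (∀ i, x i ^ k ≠ y i ^ k) ∧
      (∀ i j, i ≠ j → x i ^ k ≠ x j ^ k ∧ y i ^ k ≠ y j ^ k) :=
  stmt_9_general k n hk hn F lam hlam hq
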